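/- Let A=(S,R) be an argumentation network (S possibly infinite) and let λ be a complete extension of A. Define a two-world constant-domain predicate G3 model M with domain S, with R interpreted by the attack relation of A, and with the predicate In interpreted by ι_t = {x : λ(x)=in} and ι_s = {x : λ(x)=in or λ(x)=und}. Then t forces each of (A1),(A2),(B1),(B2) in M. -/

import Mathlib

/-- The three Caminada labels. -/
inductive Label where
  | in_ : Label
  | out : Label
  | und : Label
deriving DecidableEq

/-- Caminada labelling / complete extension of the network `(S, R)`. -/
def IsCompleteExt {S : Type} (R : S → S → Prop) (l : S → Label) : Prop :=
  (∀ x, l x = .in_ ↔ ∀ y, R y x → l y = .out) ∧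
  (∀ x, l x = .out ↔ ∃ y, R y x ∧ l y = .in_) ∧
  (∀ x, l x = .und ↔ ((∀ y, R y x → l y ≠ .in_) ∧ ∃ y, R y x ∧ l y = .und))

/- Two-world constant-domain predicate G3 model: worlds are `Bool` with
`false = t < true = s`; `R` is interpreted world-independently; the unary
predicate `In` is interpreted by `iota w`, with `iota false ⊆ iota true`
(persistence).  Below, the intuitionistic forcing of each axiom is unfolded:
`∀` and `→` and `¬` quantify over all worlds `≥` the current one, `n` holds
exactly at world `s = true`. -/

/-- `w ⊨ (A1)`, i.e. `∀x[In(x) → (n ∨ ∀y(yRx → ¬In(y)))]` at world `w`. -/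
def fA1 {S : Type} (R : S → S → Prop) (iota : Bool → S → Prop) (w : Bool) : Prop :=
  ∀ b, w ≤ b → ∀ x : S, ∀ c, b ≤ c → iota c x →
    (c = true ∨ ∀ e, c ≤ e → ∀ y : S, ∀ f, e ≤ f → R y x → ∀ g, f ≤ g → ¬ iota g y)

/-- `w ⊨ (A2)`, i.e. `∀x[∀y(yRx → ¬In(y)) → (n ∨ In(x))]` at world `w`. -/
def fA2 {S : Type} (R : S → S → Prop) (iota : Bool → S → Prop) (w : Bool) : Prop :=
  ∀ b, w ≤ b → ∀ x : S, ∀ c, b ≤ c →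
    (∀ e, c ≤ e → ∀ y : S, ∀ f, e ≤ f → R y x → ∀ g, f ≤ g → ¬ iota g y) →
    (c = true ∨ iota c x)

/-- `w ⊨ (B1)`, i.e. `∀x[¬In(x) → (n ∨ ∃y(yRx ∧ In(y)))]` at world `w`. -/
def fB1 {S : Type} (R : S → S → Prop) (iota : Bool → S → Prop) (w : Bool) : Prop :=
  ∀ b, w ≤ b → ∀ x : S, ∀ c, b ≤ c → (∀ d, c ≤ d → ¬ iota d x) →
    (c = true ∨ ∃ y : S, R y x ∧ iota c y)

/-- `w ⊨ (B2)`, i.e. `∀x[∃y(yRx ∧ In(y)) → (n ∨ ¬In(x))]` at world `w`. -/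
def fB2 {S : Type} (R : S → S → Prop) (iota : Bool → S → Prop) (w : Bool) : Prop :=
  ∀ b, w ≤ b → ∀ x : S, ∀ c, b ≤ c → (∃ y : S, R y x ∧ iota c y) →
    (c = true ∨ ∀ d, c ≤ d → ¬ iota d x)

/-! At world `s` the constant `n` is forced, so every axiom holds there trivially; at world `t`
each axiom therefore reduces to a Caminada condition. The two facts that make the reduction work:
a node labelled `out` lies in no `ι_w`, and `¬In(x)` forced at `t` means `x ∉ ι_s`,
i.e. `λ(x) = out`. -/

theorem Label.eq_out_of_not_in_or_und {a : Label} (h : ¬(a = .in_ ∨ a = .und)) : a = .out := by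
  cases a <;> simp_all

section TwoWorldModel

variable {S : Type} {R : S → S → Prop} {l : S → Label} {iota : Bool → S → Prop}

theorem label_ne_out_of_iota (hiota_t : ∀ x, iota false x ↔ l x = .in_)
    (hiota_s : ∀ x, iota true x ↔ (l x = .in_ ∨ l x = .und)) {w : Bool} {x : S}
    (h : iota w x) : l x ≠ .out := by
  cases w
  · simp [(hiota_t x).1 h]
  · rcases (hiota_s x).1 h with h | h <;> simp [h]

theorem label_eq_out_of_not_iota_true (hiota_s : ∀ x, iota true x ↔ (l x = .in_ ∨ l x = .und))
    {x : S} (h : ¬iota true x) : l x = .out :=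
  Label.eq_out_of_not_in_or_und (mt (hiota_s x).2 h)

theorem fA1_false_of_isCompleteExt (hl : IsCompleteExt R l)
    (hiota_t : ∀ x, iota false x ↔ l x = .in_)
    (hiota_s : ∀ x, iota true x ↔ (l x = .in_ ∨ l x = .und)) : fA1 R iota false := by
  intro _ _ x c _ hx
  refine (Bool.eq_false_or_eq_true c).imp_right fun hc => ?_
  subst hc
  intro _ _ y _ _ hyx _ _ hy
  exact label_ne_out_of_iota hiota_t hiota_s hy ((hl.1 x).1 ((hiota_t x).1 hx) y hyx)

theorem fA2_false_of_isCompleteExt (hl : IsCompleteExt R l)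
    (hiota_t : ∀ x, iota false x ↔ l x = .in_)
    (hiota_s : ∀ x, iota true x ↔ (l x = .in_ ∨ l x = .und)) : fA2 R iota false := by
  intro _ _ x c _ hx
  refine (Bool.eq_false_or_eq_true c).imp_right fun hc => ?_
  subst hc
  refine (hiota_t x).2 ((hl.1 x).2 fun y hyx => ?_)
  exact label_eq_out_of_not_iota_true hiota_s (hx false le_rfl y false le_rfl hyx true (Bool.false_le _))

theorem fB1_false_of_isCompleteExt (hl : IsCompleteExt R l)
    (hiota_t : ∀ x, iota false x ↔ l x = .in_)
    (hiota_s : ∀ x, iota true x ↔ (l x = .in_ ∨ l x = .und)) : fB1 R iota false := by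
  intro _ _ x c _ hx
  refine (Bool.eq_false_or_eq_true c).imp_right fun hc => ?_
  subst hc
  obtain ⟨y, hyx, hy⟩ :=
    (hl.2.1 x).1 (label_eq_out_of_not_iota_true hiota_s (hx true (Bool.false_le _)))
  exact ⟨y, hyx, (hiota_t y).2 hy⟩

theorem fB2_false_of_isCompleteExt (hl : IsCompleteExt R l)
    (hiota_t : ∀ x, iota false x ↔ l x = .in_)
    (hiota_s : ∀ x, iota true x ↔ (l x = .in_ ∨ l x = .und)) : fB2 R iota false := by
  intro _ _ x c _ hx
  refine (Bool.eq_false_or_eq_true c).imp_right fun hc => ?_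
  subst hc
  obtain ⟨y, hyx, hy⟩ := hx
  intro _ _ hd
  exact label_ne_out_of_iota hiota_t hiota_s hd ((hl.2.1 x).2 ⟨y, hyx, (hiota_t y).1 hy⟩)

end TwoWorldModel

theorem stmt11_general {S : Type} (R : S → S → Prop) (l : S → Label)
    (hl : IsCompleteExt R l)
    (iota : Bool → S → Prop)
    (hiota_t : ∀ x, iota false x ↔ l x = .in_)
    (hiota_s : ∀ x, iota true x ↔ (l x = .in_ ∨ l x = .und)) :
    fA1 R iota false ∧ fA2 R iota false ∧ fB1 R iota false ∧ fB2 R iota false :=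
  ⟨fA1_false_of_isCompleteExt hl hiota_t hiota_s, fA2_false_of_isCompleteExt hl hiota_t hiota_s,
    fB1_false_of_isCompleteExt hl hiota_t hiota_s, fB2_false_of_isCompleteExt hl hiota_t hiota_s⟩

/-- If `λ` is a complete extension of `(S,R)` and `M` is the two-world
constant-domain predicate G3 model with domain `S`, relation `R`, and `In`
interpreted by `ι_t = {x : λ(x)=in}`, `ι_s = {x : λ(x)=in or λ(x)=und}`, then
`t` forces each of (A1),(A2),(B1),(B2) in `M`. -/
theorem stmt11 {S : Type} [Nonempty S] (R : S → S → Prop) (l : S → Label)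
    (hl : IsCompleteExt R l)
    (iota : Bool → S → Prop)
    (hiota_t : ∀ x, iota false x ↔ l x = .in_)
    (hiota_s : ∀ x, iota true x ↔ (l x = .in_ ∨ l x = .und)) :
    fA1 R iota false ∧ fA2 R iota false ∧ fB1 R iota false ∧ fB2 R iota false :=
  stmt11_general R l hl iota hiota_t hiota_s
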